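/- Prenex sentences admit validity-equivalent and 1-satisfiability-equivalent standard Skolemizations: let V be a Gödel set, L a language, f an n-ary function symbol not in L, and F(x₁,…,xₙ,y) an L-formula. Then (1) the sentence ∃x₁⋯∃xₙ∀y F(x̄,y) is valid in G_V over L-interpretations if and only if ∃x₁⋯∃xₙ F(x̄, f(x̄)) is valid in G_V over (L ∪ {f})-interpretations; and (2) the sentence ∀x₁⋯∀xₙ∃y F(x̄,y) is 1-satisfiable in G_V if and only if ∀x₁⋯∀xₙ F(x̄, f(x̄)) is 1-satisfiable in G_V over the extended language. -/

import Mathlib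

/-!
(1) Since `f(x̄)` is one of the values of `y`, Skolemizing `∀y` can only raise the value of the
`∃x̄`-prefixed sentence. Conversely, if `∃x̄∀y F` has value `c < 1` under `I`, pick for every `x̄`
some `y` with `F(x̄, y) < (1 + c) / 2` and interpret `f` by these choices: the Skolem form then
has value at most `(1 + c) / 2`.

(2) The reduct of a model of `∀x̄ F(x̄, f(x̄))` is a model of `∀x̄∃y F`. Conversely the suprema
`∃y F(x̄, y) = 1` need not be attained, so fix `ω < 1`, interpret `f(x̄)` by some `y` with
`F(x̄, y) > ω`, and push all atomic values through a map `h` that commutes with the Gödel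
connectives and quantifiers on `V` and sends `(ω, 1]` to `1`: if some `ω ∈ (0, 1)` is missing
from `V`, let `h` be the identity up to `ω` and `1` above it; otherwise `V = [0, 1]` and
`h x = min (2x) 1`.
-/

namespace GodelPaper

/-- A first-order language: function and relation symbols of each arity. -/
structure Lang where
  Func : ℕ → Type
  Rel : ℕ → Type

/-- A Gödel set: a closed subset of [0,1] containing 0 and 1. -/
def GodelSet (V : Set ℝ) : Prop :=
  IsClosed V ∧ V ⊆ Set.Icc 0 1 ∧ (0:ℝ) ∈ V ∧ (1:ℝ) ∈ V

/-- Terms with variables from `α`. -/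
inductive Term (L : Lang) (α : Type) : Type
  | var : α → Term L α
  | func : ∀ {k}, L.Func k → (Fin k → Term L α) → Term L α

/-- A `V`-interpretation: nonempty domain, interpretation of function symbols,
and truth values in `V` for atomic sentences with parameters. -/
structure Interp (L : Lang) (V : Set ℝ) where
  Dom : Type
  dom_nonempty : Nonempty Dom
  funMap : ∀ {k}, L.Func k → (Fin k → Dom) → Dom
  relVal : ∀ {k}, L.Rel k → (Fin k → Dom) → ℝ
  relVal_mem : ∀ {k} (R : L.Rel k) (v : Fin k → Dom), relVal R v ∈ V

def Term.eval {L : Lang} {V : Set ℝ} (I : Interp L V) {α : Type} (v : α → I.Dom) :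
    Term L α → I.Dom
  | .var i => v i
  | .func f ts => I.funMap f fun j => Term.eval I v (ts j)

/-- Formulas of the Δ-extended language, with free variables among `Fin n`.
The quantifiers bind the *last* variable. Δ-free formulas (i.e. formulas of the
plain language) are singled out by the predicate `DeltaFree` below. -/
inductive Form (L : Lang) : ℕ → Type
  | falsum : ∀ {n}, Form L n
  | atom : ∀ {n k}, L.Rel k → (Fin k → Term L (Fin n)) → Form L n
  | conj : ∀ {n}, Form L n → Form L n → Form L n
  | disj : ∀ {n}, Form L n → Form L n → Form L n
  | impl : ∀ {n}, Form L n → Form L n → Form L n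
  | delta : ∀ {n}, Form L n → Form L n
  | all : ∀ {n}, Form L (n+1) → Form L n
  | ex : ∀ {n}, Form L (n+1) → Form L n

/-- The Gödel truth value of a formula under an interpretation and an
assignment of the free variables. -/
noncomputable def Form.val {L : Lang} {V : Set ℝ} (I : Interp L V) :
    ∀ {n}, Form L n → (Fin n → I.Dom) → ℝ
  | _, .falsum, _ => 0
  | _, .atom R ts, ρ => I.relVal R fun j => Term.eval I ρ (ts j)
  | _, .conj A B, ρ => min (Form.val I A ρ) (Form.val I B ρ)
  | _, .disj A B, ρ => max (Form.val I A ρ) (Form.val I B ρ)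
  | _, .impl A B, ρ => if Form.val I A ρ ≤ Form.val I B ρ then 1 else Form.val I B ρ
  | _, .delta A, ρ => if Form.val I A ρ = 1 then 1 else 0
  | _, .all A, ρ => sInf {v : ℝ | ∃ d : I.Dom, v = Form.val I A (Fin.snoc ρ d)}
  | _, .ex A, ρ => sSup {v : ℝ | ∃ d : I.Dom, v = Form.val I A (Fin.snoc ρ d)}

/-- The value of a sentence. -/
noncomputable def Form.sval {L : Lang} {V : Set ℝ} (I : Interp L V) (A : Form L 0) : ℝ :=
  Form.val I A Fin.elim0

/-- `A` is valid in `G_V`. -/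
def Valid {L : Lang} (V : Set ℝ) (A : Form L 0) : Prop :=
  ∀ I : Interp L V, Form.sval I A = 1

/-- `A` is 1-satisfiable in `G_V`. -/
def OneSat {L : Lang} (V : Set ℝ) (A : Form L 0) : Prop :=
  ∃ I : Interp L V, Form.sval I A = 1

/-- `A` is classically satisfiable: it takes value 1 under a `V`-interpretation
assigning only values in {0,1} to atomic sentences. -/
def ClassSat {L : Lang} (V : Set ℝ) (A : Form L 0) : Prop :=
  ∃ I : Interp L V,
    (∀ {k : ℕ} (R : L.Rel k) (v : Fin k → I.Dom), I.relVal R v = 0 ∨ I.relVal R v = 1) ∧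
    Form.sval I A = 1

/-- ¬A abbreviates A ⊃ ⊥. -/
def Form.not {L : Lang} {n : ℕ} (A : Form L n) : Form L n := Form.impl A Form.falsum

/-- A ↔ B abbreviates (A ⊃ B) ∧ (B ⊃ A). -/
def Form.iff {L : Lang} {n : ℕ} (A B : Form L n) : Form L n :=
  Form.conj (Form.impl A B) (Form.impl B A)

/-- Formulas of the plain language (no Δ). -/
def DeltaFree {L : Lang} : ∀ {n}, Form L n → Prop
  | _, .falsum => True
  | _, .atom _ _ => True
  | _, .conj A B => DeltaFree A ∧ DeltaFree B
  | _, .disj A B => DeltaFree A ∧ DeltaFree B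
  | _, .impl A B => DeltaFree A ∧ DeltaFree B
  | _, .delta _ => False
  | _, .all A => DeltaFree A
  | _, .ex A => DeltaFree A

/-- Quantifier-free formulas. -/
def QuantFree {L : Lang} : ∀ {n}, Form L n → Prop
  | _, .falsum => True
  | _, .atom _ _ => True
  | _, .conj A B => QuantFree A ∧ QuantFree B
  | _, .disj A B => QuantFree A ∧ QuantFree B
  | _, .impl A B => QuantFree A ∧ QuantFree B
  | _, .delta A => QuantFree A
  | _, .all _ => False
  | _, .ex _ => False

/-- Formulas containing no universal quantifier. -/
def AllFree {L : Lang} : ∀ {n}, Form L n → Prop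
  | _, .falsum => True
  | _, .atom _ _ => True
  | _, .conj A B => AllFree A ∧ AllFree B
  | _, .disj A B => AllFree A ∧ AllFree B
  | _, .impl A B => AllFree A ∧ AllFree B
  | _, .delta A => AllFree A
  | _, .all _ => False
  | _, .ex A => AllFree A

/-- Prenex formulas: a block of quantifiers followed by a quantifier-free matrix. -/
inductive IsPrenex {L : Lang} : ∀ {n}, Form L n → Prop
  | qf {n} {A : Form L n} : QuantFree A → IsPrenex A
  | all {n} {A : Form L (n+1)} : IsPrenex A → IsPrenex (Form.all A)
  | ex {n} {A : Form L (n+1)} : IsPrenex A → IsPrenex (Form.ex A)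

/-- Purely existential prenex formulas. -/
inductive ExPrenex {L : Lang} : ∀ {n}, Form L n → Prop
  | qf {n} {A : Form L n} : QuantFree A → ExPrenex A
  | ex {n} {A : Form L (n+1)} : ExPrenex A → ExPrenex (Form.ex A)

/-- The glued interpretation `I_ω`: atoms with value ≤ ω keep their value,
all other atoms get value 1. Same domain and function interpretations. -/
noncomputable def Interp.glue {L : Lang} {V : Set ℝ} (I : Interp L V) (ω : ℝ)
    (h1 : (1:ℝ) ∈ V) : Interp L V where
  Dom := I.Dom
  dom_nonempty := I.dom_nonempty
  funMap := fun {k} f v => I.funMap f v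
  relVal := fun {k} R v => if I.relVal R v ≤ ω then I.relVal R v else 1
  relVal_mem := fun {k} R v => by
    by_cases h : I.relVal R v ≤ ω
    · simpa [h] using I.relVal_mem R v
    · simpa [h] using h1

/-- The Gödel set `V_↑ = {1 - 1/k : k ≥ 1} ∪ {1}`. -/
def Vup : Set ℝ := {x : ℝ | ∃ k : ℕ, 1 ≤ k ∧ x = 1 - 1/(k:ℝ)} ∪ {1}

/-- The `m`-element Gödel set `V_m = {1 - 1/k : 1 ≤ k ≤ m-1} ∪ {1}`. -/
def Vfin (m : ℕ) : Set ℝ :=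
  {x : ℝ | ∃ k : ℕ, 1 ≤ k ∧ k ≤ m - 1 ∧ x = 1 - 1/(k:ℝ)} ∪ {1}

/-- Atomic formula built from a unary predicate. -/
def atom1 {L : Lang} (P : L.Rel 1) {n : ℕ} (t : Term L (Fin n)) : Form L n :=
  Form.atom P fun _ => t

/-- Atomic formula built from a 0-ary predicate (propositional atom). -/
def atom0 {L : Lang} (X : L.Rel 0) {n : ℕ} : Form L n :=
  Form.atom X fun i => i.elim0

def Term.rename {L : Lang} {α β : Type} (f : α → β) : Term L α → Term L β
  | .var i => .var (f i)
  | .func g ts => .func g fun j => Term.rename f (ts j)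

def Form.rename {L : Lang} : ∀ {m n}, (Fin m → Fin n) → Form L m → Form L n
  | _, _, _, .falsum => .falsum
  | _, _, f, .atom R ts => .atom R fun j => (ts j).rename f
  | _, _, f, .conj A B => .conj (A.rename f) (B.rename f)
  | _, _, f, .disj A B => .disj (A.rename f) (B.rename f)
  | _, _, f, .impl A B => .impl (A.rename f) (B.rename f)
  | _, _, f, .delta A => .delta (A.rename f)
  | _, _, f, .all A =>
      .all (A.rename (Fin.lastCases (Fin.last _) fun i => Fin.castSucc (f i)))
  | _, _, f, .ex A =>
      .ex (A.rename (Fin.lastCases (Fin.last _) fun i => Fin.castSucc (f i)))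

/-- Weakening: regard a formula with `n` free variables as one with `n+1`
free variables (not using the new last variable). -/
def Form.lift {L : Lang} {n : ℕ} (A : Form L n) : Form L (n+1) :=
  A.rename Fin.castSucc

def Term.subst {L : Lang} {α β : Type} (σ : α → Term L β) : Term L α → Term L β
  | .var i => σ i
  | .func g ts => .func g fun j => Term.subst σ (ts j)

def Form.subst {L : Lang} : ∀ {m n}, (Fin m → Term L (Fin n)) → Form L m → Form L n
  | _, _, _, .falsum => .falsum
  | _, _, σ, .atom R ts => .atom R fun j => (ts j).subst σ
  | _, _, σ, .conj A B => .conj (A.subst σ) (B.subst σ)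
  | _, _, σ, .disj A B => .disj (A.subst σ) (B.subst σ)
  | _, _, σ, .impl A B => .impl (A.subst σ) (B.subst σ)
  | _, _, σ, .delta A => .delta (A.subst σ)
  | _, _, σ, .all A =>
      .all (A.subst (Fin.lastCases (.var (Fin.last _))
        fun i => (σ i).rename Fin.castSucc))
  | _, _, σ, .ex A =>
      .ex (A.subst (Fin.lastCases (.var (Fin.last _))
        fun i => (σ i).rename Fin.castSucc))

/-- The language `L ∪ {f}` with one new function symbol of arity `a`. -/
def Lang.addFunc (L : Lang) (a : ℕ) : Lang where
  Func := fun k => L.Func k ⊕ PLift (k = a)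
  Rel := L.Rel

/-- The new function symbol of `L.addFunc a`. -/
def newFunc (L : Lang) (a : ℕ) : (L.addFunc a).Func a := Sum.inr ⟨rfl⟩

def Term.emb {L : Lang} {a : ℕ} {α : Type} : Term L α → Term (L.addFunc a) α
  | .var i => .var i
  | .func g ts => .func (Sum.inl g) fun j => Term.emb (ts j)

/-- Embedding of `L`-formulas into the language with the extra function symbol. -/
def Form.emb {L : Lang} {a : ℕ} : ∀ {n}, Form L n → Form (L.addFunc a) n
  | _, .falsum => .falsum
  | _, .atom R ts => .atom R fun j => (ts j).emb
  | _, .conj A B => .conj A.emb B.emb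
  | _, .disj A B => .disj A.emb B.emb
  | _, .impl A B => .impl A.emb B.emb
  | _, .delta A => .delta A.emb
  | _, .all A => .all A.emb
  | _, .ex A => .ex A.emb

/-- Prefix of `n` existential quantifiers (outermost quantifier binds variable 0). -/
def Form.exN {L : Lang} : ∀ n, Form L n → Form L 0
  | 0, A => A
  | n+1, A => Form.exN n (Form.ex A)

/-- Prefix of `n` universal quantifiers (outermost quantifier binds variable 0). -/
def Form.allN {L : Lang} : ∀ n, Form L n → Form L 0
  | 0, A => A
  | n+1, A => Form.allN n (Form.all A)


open Set

section Development

variable {L : Lang} {V : Set ℝ}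

instance Interp.nonempty_dom (I : Interp L V) : Nonempty I.Dom := I.dom_nonempty

lemma godelSet_Icc : GodelSet (Icc 0 1) :=
  ⟨isClosed_Icc, subset_rfl, left_mem_Icc.2 zero_le_one, right_mem_Icc.2 zero_le_one⟩

lemma GodelSet.iInf_mem {W : Set ℝ} (hW : GodelSet W) {ι : Type} [Nonempty ι] {g : ι → ℝ}
    (hg : ∀ i, g i ∈ W) : ⨅ i, g i ∈ W :=
  closure_minimal (range_subset_iff.2 hg) hW.1 <|
    csInf_mem_closure (range_nonempty g) ⟨0, forall_mem_range.2 fun i => (hW.2.1 (hg i)).1⟩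

lemma GodelSet.iSup_mem {W : Set ℝ} (hW : GodelSet W) {ι : Type} [Nonempty ι] {g : ι → ℝ}
    (hg : ∀ i, g i ∈ W) : ⨆ i, g i ∈ W :=
  closure_minimal (range_subset_iff.2 hg) hW.1 <|
    csSup_mem_closure (range_nonempty g) ⟨1, forall_mem_range.2 fun i => (hW.2.1 (hg i)).2⟩

lemma Form.val_all (I : Interp L V) {n : ℕ} (A : Form L (n+1)) (ρ : Fin n → I.Dom) :
    (Form.all A).val I ρ = ⨅ d, A.val I (Fin.snoc ρ d) := by
  rw [Form.val, iInf]
  exact congrArg sInf (Set.ext fun _ => exists_congr fun _ => eq_comm)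

lemma Form.val_ex (I : Interp L V) {n : ℕ} (A : Form L (n+1)) (ρ : Fin n → I.Dom) :
    (Form.ex A).val I ρ = ⨆ d, A.val I (Fin.snoc ρ d) := by
  rw [Form.val, iSup]
  exact congrArg sSup (Set.ext fun _ => exists_congr fun _ => eq_comm)

lemma Form.val_mem {W : Set ℝ} (hW : GodelSet W) (hVW : V ⊆ W) (I : Interp L V) {n : ℕ}
    (A : Form L n) (ρ : Fin n → I.Dom) : A.val I ρ ∈ W := by
  induction A with
  | falsum => exact hW.2.2.1
  | atom R ts => exact hVW (I.relVal_mem R _)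
  | conj A B ihA ihB =>
    rcases min_choice (A.val I ρ) (B.val I ρ) with h | h <;> simp only [Form.val, h, ihA, ihB]
  | disj A B ihA ihB =>
    rcases max_choice (A.val I ρ) (B.val I ρ) with h | h <;> simp only [Form.val, h, ihA, ihB]
  | impl A B ihA ihB => simp only [Form.val]; split_ifs <;> simp only [hW.2.2.2, ihB]
  | delta A ih => simp only [Form.val]; split_ifs <;> simp only [hW.2.2.1, hW.2.2.2]
  | all A ih => rw [Form.val_all]; exact hW.iInf_mem fun d => ih _
  | ex A ih => rw [Form.val_ex]; exact hW.iSup_mem fun d => ih _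

lemma Form.val_mem_Icc (hV : V ⊆ Icc 0 1) (I : Interp L V) {n : ℕ} (A : Form L n)
    (ρ : Fin n → I.Dom) : A.val I ρ ∈ Icc 0 1 :=
  A.val_mem godelSet_Icc hV I ρ

lemma Form.bddAbove_range_val (hV : V ⊆ Icc 0 1) (I : Interp L V) {n : ℕ} (A : Form L (n+1))
    (ρ : Fin n → I.Dom) : BddAbove (range fun d => A.val I (Fin.snoc ρ d)) :=
  ⟨1, forall_mem_range.2 fun _ => (A.val_mem_Icc hV I _).2⟩

lemma Form.bddBelow_range_val (hV : V ⊆ Icc 0 1) (I : Interp L V) {n : ℕ} (A : Form L (n+1))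
    (ρ : Fin n → I.Dom) : BddBelow (range fun d => A.val I (Fin.snoc ρ d)) :=
  ⟨0, forall_mem_range.2 fun _ => (A.val_mem_Icc hV I _).1⟩

lemma Form.val_all_le (hV : V ⊆ Icc 0 1) (I : Interp L V) {n : ℕ} (A : Form L (n+1))
    (ρ : Fin n → I.Dom) (d : I.Dom) : (Form.all A).val I ρ ≤ A.val I (Fin.snoc ρ d) := by
  rw [Form.val_all]
  exact ciInf_le (A.bddBelow_range_val hV I ρ) d

lemma Form.le_val_ex (hV : V ⊆ Icc 0 1) (I : Interp L V) {n : ℕ} (A : Form L (n+1))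
    (ρ : Fin n → I.Dom) (d : I.Dom) : A.val I (Fin.snoc ρ d) ≤ (Form.ex A).val I ρ := by
  rw [Form.val_ex]
  exact le_ciSup (A.bddAbove_range_val hV I ρ) d

lemma Form.sval_exN_le_iff (hV : V ⊆ Icc 0 1) (I : Interp L V) {n : ℕ} (A : Form L n)
    (c : ℝ) : (Form.exN n A).sval I ≤ c ↔ ∀ ρ, A.val I ρ ≤ c := by
  induction n with
  | zero => exact ⟨fun h ρ => by rwa [Subsingleton.elim ρ Fin.elim0], fun h => h _⟩
  | succ n ih =>
    simp only [Form.exN, ih, Form.val_ex, ciSup_le_iff (A.bddAbove_range_val hV I _)]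
    exact ⟨fun h ρ => Fin.snoc_init_self ρ ▸ h _ _, fun h τ d => h _⟩

lemma Form.le_sval_exN (hV : V ⊆ Icc 0 1) (I : Interp L V) {n : ℕ} (A : Form L n)
    (ρ : Fin n → I.Dom) : A.val I ρ ≤ (Form.exN n A).sval I :=
  (A.sval_exN_le_iff hV I _).1 le_rfl ρ

lemma Form.le_sval_allN_iff (hV : V ⊆ Icc 0 1) (I : Interp L V) {n : ℕ} (A : Form L n)
    (c : ℝ) : c ≤ (Form.allN n A).sval I ↔ ∀ ρ, c ≤ A.val I ρ := by
  induction n with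
  | zero => exact ⟨fun h ρ => by rwa [Subsingleton.elim ρ Fin.elim0], fun h => h _⟩
  | succ n ih =>
    simp only [Form.allN, ih, Form.val_all, le_ciInf_iff (A.bddBelow_range_val hV I _)]
    exact ⟨fun h ρ => Fin.snoc_init_self ρ ▸ h _ _, fun h τ d => h _⟩

lemma Form.sval_allN_eq_one_iff (hV : V ⊆ Icc 0 1) (I : Interp L V) {n : ℕ} (A : Form L n) :
    (Form.allN n A).sval I = 1 ↔ ∀ ρ, A.val I ρ = 1 := by
  refine ⟨fun h ρ => ?_, fun h => ?_⟩
  · exact le_antisymm (A.val_mem_Icc hV I ρ).2 ((A.le_sval_allN_iff hV I 1).1 h.ge ρ)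
  · exact le_antisymm ((Form.allN n A).val_mem_Icc hV I _).2
      ((A.le_sval_allN_iff hV I 1).2 fun ρ => (h ρ).ge)

lemma Term.eval_rename (I : Interp L V) {α β : Type} (f : α → β) (v : β → I.Dom)
    (t : Term L α) : (t.rename f).eval I v = t.eval I (v ∘ f) := by
  induction t with
  | var i => rfl
  | func g ts ih => simp only [Term.rename, Term.eval, ih]

lemma Term.eval_subst (I : Interp L V) {α β : Type} (σ : α → Term L β) (v : β → I.Dom)
    (t : Term L α) : (t.subst σ).eval I v = t.eval I fun i => (σ i).eval I v := by
  induction t with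
  | var i => rfl
  | func g ts ih => simp only [Term.subst, Term.eval, ih]

lemma Term.eval_lastCases_snoc (I : Interp L V) {m n : ℕ} (σ : Fin m → Term L (Fin n))
    (ρ : Fin n → I.Dom) (d : I.Dom) :
    (fun i => (Fin.lastCases (Term.var (Fin.last n)) (fun i => (σ i).rename Fin.castSucc) i :
      Term L (Fin (n+1))).eval I (Fin.snoc ρ d)) = Fin.snoc (fun i => (σ i).eval I ρ) d := by
  funext i
  refine Fin.lastCases ?_ (fun j => ?_) i
  · simp [Term.eval]
  · simp [Term.eval_rename, Function.comp_def]

lemma Form.val_subst (I : Interp L V) {m n : ℕ} (σ : Fin m → Term L (Fin n)) (A : Form L m)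
    (ρ : Fin n → I.Dom) : (A.subst σ).val I ρ = A.val I fun i => (σ i).eval I ρ := by
  induction A generalizing n with
  | all A ih => simp only [Form.subst, Form.val_all, ih, Term.eval_lastCases_snoc]
  | ex A ih => simp only [Form.subst, Form.val_ex, ih, Term.eval_lastCases_snoc]
  | _ => simp only [Form.subst, Form.val, Term.eval_subst, *]

def Interp.reduct {a : ℕ} (J : Interp (L.addFunc a) V) : Interp L V where
  Dom := J.Dom
  dom_nonempty := J.dom_nonempty
  funMap f := J.funMap (Sum.inl f)
  relVal R := J.relVal R
  relVal_mem R := J.relVal_mem R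

def Interp.expand {a : ℕ} (I : Interp L V) (g : (Fin a → I.Dom) → I.Dom) :
    Interp (L.addFunc a) V where
  Dom := I.Dom
  dom_nonempty := I.dom_nonempty
  funMap
    | .inl f, v => I.funMap f v
    | .inr e, v => g fun j => v (Fin.cast e.down.symm j)
  relVal R := I.relVal R
  relVal_mem R := I.relVal_mem R

lemma Term.eval_emb {a : ℕ} (J : Interp (L.addFunc a) V) {α : Type} (v : α → J.Dom)
    (t : Term L α) : (Term.emb (a := a) t).eval J v = t.eval J.reduct v := by
  induction t with
  | var i => rfl
  | func g ts ih => simp only [Term.emb, Term.eval, ih]; rfl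

lemma Form.val_emb {a : ℕ} (J : Interp (L.addFunc a) V) {n : ℕ} (A : Form L n)
    (ρ : Fin n → J.Dom) : (Form.emb (a := a) A).val J ρ = A.val J.reduct ρ := by
  induction A with
  | atom R ts => simp only [Form.emb, Form.val, Term.eval_emb]; rfl
  | all A ih => simp only [Form.emb, Form.val_all, ih]; exact (Form.val_all J.reduct A ρ).symm
  | ex A ih => simp only [Form.emb, Form.val_ex, ih]; exact (Form.val_ex J.reduct A ρ).symm
  | _ => simp only [Form.emb, Form.val, *]

/-- `F(x̄, f(x̄))` for `F(x̄, y)` and the new function symbol `f`. -/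
def Form.skolem {n : ℕ} (F : Form L (n+1)) : Form (L.addFunc n) n :=
  (Form.emb (a := n) F).subst
    (Fin.lastCases (Term.func (newFunc L n) fun j => Term.var j) fun i => Term.var i)

lemma Form.val_skolem {n : ℕ} (J : Interp (L.addFunc n) V) (F : Form L (n+1))
    (ρ : Fin n → J.Dom) :
    F.skolem.val J ρ = F.val J.reduct (Fin.snoc ρ (J.funMap (newFunc L n) ρ)) := by
  rw [Form.skolem, Form.val_subst, Form.val_emb]
  congr 1
  funext i
  refine Fin.lastCases ?_ (fun j => ?_) i <;>
    simp only [Fin.lastCases_last, Fin.lastCases_castSucc, Term.eval]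
  · exact (Fin.snoc_last (α := fun _ => J.Dom) ..).symm
  · exact (Fin.snoc_castSucc (α := fun _ => J.Dom) ..).symm

structure IsGodelHom (V : Set ℝ) (h : ℝ → ℝ) : Prop where
  mapsTo : MapsTo h V V
  monotone : Monotone h
  continuousAt : ∀ x ∈ V, ContinuousAt h x
  map_zero : h 0 = 0
  map_one : h 1 = 1
  -- this makes `h` commute with Gödel implication
  eq_one_of_map_le : ∀ a b, b < a → h a ≤ h b → h b = 1

def Interp.mapVal (I : Interp L V) {h : ℝ → ℝ} (hh : MapsTo h V V) : Interp L V where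
  Dom := I.Dom
  dom_nonempty := I.dom_nonempty
  funMap := I.funMap
  relVal R v := h (I.relVal R v)
  relVal_mem R v := hh (I.relVal_mem R v)

lemma Term.eval_mapVal (I : Interp L V) {h : ℝ → ℝ} (hh : MapsTo h V V) {α : Type}
    (v : α → I.Dom) (t : Term L α) : t.eval (I.mapVal hh) v = t.eval I v := by
  induction t with
  | var i => rfl
  | func g ts ih => simp only [Term.eval, ih]; rfl

lemma Form.val_mapVal (hV : GodelSet V) {h : ℝ → ℝ} (hh : IsGodelHom V h) (I : Interp L V)
    {n : ℕ} (A : Form L n) (hA : DeltaFree A) (ρ : Fin n → I.Dom) :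
    A.val (I.mapVal hh.mapsTo) ρ = h (A.val I ρ) := by
  induction A with
  | falsum => exact hh.map_zero.symm
  | atom R ts => simp only [Form.val, Term.eval_mapVal]; rfl
  | conj A B ihA ihB => simp only [Form.val, ihA hA.1, ihB hA.2, hh.monotone.map_min]
  | disj A B ihA ihB => simp only [Form.val, ihA hA.1, ihB hA.2, hh.monotone.map_max]
  | impl A B ihA ihB =>
    simp only [Form.val, ihA hA.1, ihB hA.2]
    by_cases hAB : A.val I ρ ≤ B.val I ρ
    · rw [if_pos hAB, if_pos (hh.monotone hAB), hh.map_one]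
    · by_cases hhAB : h (A.val I ρ) ≤ h (B.val I ρ)
      · rw [if_neg hAB, if_pos hhAB, hh.eq_one_of_map_le _ _ (not_le.1 hAB) hhAB]
      · rw [if_neg hAB, if_neg hhAB]
  | delta A ih => exact hA.elim
  | all A ih =>
    have hcont := hh.continuousAt _ (A.all.val_mem hV le_rfl I ρ)
    rw [Form.val_all] at hcont
    refine (Form.val_all (I.mapVal hh.mapsTo) A ρ).trans ?_
    rw [Form.val_all,
      hh.monotone.map_ciInf_of_continuousAt hcont (A.bddBelow_range_val hV.2.1 I ρ)]
    exact iInf_congr fun d => ih hA _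
  | ex A ih =>
    have hcont := hh.continuousAt _ (A.ex.val_mem hV le_rfl I ρ)
    rw [Form.val_ex] at hcont
    refine (Form.val_ex (I.mapVal hh.mapsTo) A ρ).trans ?_
    rw [Form.val_ex,
      hh.monotone.map_ciSup_of_continuousAt hcont (A.bddAbove_range_val hV.2.1 I ρ)]
    exact iSup_congr fun d => ih hA _

lemma isGodelHom_truncate (h1 : (1 : ℝ) ∈ V) {ω : ℝ} (hω0 : 0 ≤ ω) (hω1 : ω < 1)
    (hωV : ω ∉ V) : IsGodelHom V fun x => if x ≤ ω then x else 1 where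
  mapsTo x hx := by beta_reduce; split_ifs <;> assumption
  monotone a b hab := by beta_reduce; split_ifs <;> linarith
  continuousAt x hx := by
    rcases lt_or_gt_of_ne (ne_of_mem_of_not_mem hx hωV) with hlt | hgt
    · exact continuousAt_id.congr <|
        Filter.eventually_of_mem (Iio_mem_nhds hlt) fun y hy => (if_pos (le_of_lt hy)).symm
    · exact continuousAt_const.congr <|
        Filter.eventually_of_mem (Ioi_mem_nhds hgt) fun y hy => (if_neg (not_le.2 hy)).symm
  map_zero := if_pos hω0
  map_one := if_neg (not_le.2 hω1)
  eq_one_of_map_le a b hba hab := by split_ifs at hab ⊢ <;> linarith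

lemma isGodelHom_double (hV : V ⊆ Icc 0 1) (h1 : (1 : ℝ) ∈ V) (hIoo : Ioo 0 1 ⊆ V) :
    IsGodelHom V fun x => min (2 * x) 1 where
  mapsTo x hx := by
    rcases (hV hx).1.eq_or_lt with rfl | hpos
    · simpa using hx
    · rcases lt_or_ge (2 * x) 1 with hlt | hge
      · simpa [min_eq_left hlt.le] using hIoo ⟨by linarith, hlt⟩
      · simpa [min_eq_right hge] using h1
  monotone a b hab := min_le_min_right 1 (by linarith)
  continuousAt x _ := by fun_prop
  map_zero := by norm_num
  map_one := by norm_num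
  eq_one_of_map_le a b hba hab := by simp only [min_def] at *; split_ifs at hab ⊢ <;> linarith

lemma exists_isGodelHom_eq_one (hV : GodelSet V) :
    ∃ ω < 1, ∃ h, IsGodelHom V h ∧ ∀ x, ω < x → h x = 1 := by
  by_cases hIoo : Ioo 0 1 ⊆ V
  · exact ⟨1 / 2, by norm_num, _, isGodelHom_double hV.2.1 hV.2.2.2 hIoo,
      fun x hx => min_eq_right (by linarith)⟩
  · obtain ⟨ω, ⟨hω0, hω1⟩, hωV⟩ := not_subset.1 hIoo
    exact ⟨ω, hω1, _, isGodelHom_truncate hV.2.2.2 hω0.le hω1 hωV,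
      fun x hx => if_neg (not_le.2 hx)⟩

theorem valid_exN_all_iff_valid_exN_skolem (hV : V ⊆ Icc 0 1) {n : ℕ} (F : Form L (n+1)) :
    Valid V (Form.exN n (Form.all F)) ↔ Valid V (Form.exN n F.skolem) := by
  constructor
  · intro hvalid J
    refine le_antisymm ((Form.exN n F.skolem).val_mem_Icc hV J _).2 ?_
    calc 1 = (Form.exN n (Form.all F)).sval J.reduct := (hvalid _).symm
      _ ≤ (Form.exN n F.skolem).sval J := (F.all.sval_exN_le_iff hV J.reduct _).2 fun ρ =>
        calc F.all.val J.reduct ρ ≤ F.val J.reduct (Fin.snoc ρ (J.funMap (newFunc L n) ρ)) :=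
              F.val_all_le hV J.reduct ρ _
          _ = F.skolem.val J ρ := (F.val_skolem J ρ).symm
          _ ≤ _ := F.skolem.le_sval_exN hV J ρ
  · intro hvalid I
    by_contra hne
    set c := (Form.exN n (Form.all F)).sval I
    have hc : c < 1 := ((Form.exN n F.all).val_mem_Icc hV I _).2.lt_of_ne hne
    have hwitness : ∀ ρ, ∃ d, F.val I (Fin.snoc ρ d) < (1 + c) / 2 := fun ρ => by
      have hρ := (F.all.sval_exN_le_iff hV I c).1 le_rfl ρ
      rw [Form.val_all] at hρ
      exact exists_lt_of_ciInf_lt (by linarith)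
    choose g hg using hwitness
    have hle := (F.skolem.sval_exN_le_iff hV (I.expand g) ((1 + c) / 2)).2 fun ρ =>
      (F.val_skolem (I.expand g) ρ).trans_le (hg ρ).le
    linarith [hvalid (I.expand g)]

theorem oneSat_allN_ex_iff_oneSat_allN_skolem (hV : GodelSet V) {n : ℕ} (F : Form L (n+1))
    (hF : DeltaFree F) :
    OneSat V (Form.allN n (Form.ex F)) ↔ OneSat V (Form.allN n F.skolem) := by
  constructor
  · rintro ⟨I, hI⟩
    obtain ⟨ω, hω, h, hh, hh_eq_one⟩ := exists_isGodelHom_eq_one hV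
    have hwitness : ∀ ρ, ∃ d, ω < F.val I (Fin.snoc ρ d) := fun ρ => by
      have hρ := (F.ex.sval_allN_eq_one_iff hV.2.1 I).1 hI ρ
      rw [Form.val_ex] at hρ
      exact exists_lt_of_lt_ciSup (hρ ▸ hω)
    choose g hg using hwitness
    refine ⟨(I.mapVal hh.mapsTo).expand g,
      (F.skolem.sval_allN_eq_one_iff hV.2.1 _).2 fun ρ => ?_⟩
    rw [Form.val_skolem]
    exact (F.val_mapVal hV hh I hF _).trans (hh_eq_one _ (hg ρ))
  · rintro ⟨J, hJ⟩
    refine ⟨J.reduct, (F.ex.sval_allN_eq_one_iff hV.2.1 _).2 fun ρ =>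
      le_antisymm (F.ex.val_mem_Icc hV.2.1 _ ρ).2 ?_⟩
    calc 1 = F.skolem.val J ρ := ((F.skolem.sval_allN_eq_one_iff hV.2.1 J).1 hJ ρ).symm
      _ = F.val J.reduct (Fin.snoc ρ (J.funMap (newFunc L n) ρ)) := F.val_skolem J ρ
      _ ≤ F.ex.val J.reduct ρ := F.le_val_ex hV.2.1 J.reduct ρ _

end Development

/-- Prenex sentences admit validity-equivalent and
1-satisfiability-equivalent standard Skolemizations. For an `L`-formula
`F(x₁,…,xₙ,y)` (free variables `Fin (n+1)`, `y` the last) and a new `n`-ary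
function symbol `f`:
(1) `∃x̄∀y F(x̄,y)` is valid in `G_V` (over `L`-interpretations) iff
`∃x̄ F(x̄,f(x̄))` is valid in `G_V` over interpretations of `L ∪ {f}`;
(2) `∀x̄∃y F(x̄,y)` is 1-satisfiable in `G_V` iff `∀x̄ F(x̄,f(x̄))` is
1-satisfiable in `G_V` over the extended language. -/
theorem stmt_19 {L : Lang} {V : Set ℝ} (hV : GodelSet V) (n : ℕ)
    (F : Form L (n+1)) (hF : DeltaFree F) :
    (Valid V (Form.exN n (Form.all F)) ↔
      Valid V (Form.exN n (Form.subst
        (Fin.lastCases (Term.func (newFunc L n) (fun j => Term.var j))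
          (fun i => Term.var i))
        (Form.emb (a := n) F)))) ∧
    (OneSat V (Form.allN n (Form.ex F)) ↔
      OneSat V (Form.allN n (Form.subst
        (Fin.lastCases (Term.func (newFunc L n) (fun j => Term.var j))
          (fun i => Term.var i))
        (Form.emb (a := n) F)))) :=
  ⟨valid_exN_all_iff_valid_exN_skolem hV.2.1 F, oneSat_allN_ex_iff_oneSat_allN_skolem hV F hF⟩

end GodelPaper
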